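/- If a₃ = a₄ = 0 and a₁² + a₂² ≠ 0, then the Lie algebra g(a₁,a₂,0,0) is isomorphic as a real Lie algebra to so(3,ℝ) × so(3,ℝ); in particular it is the direct sum of two 3-dimensional ideals, each isomorphic to so(3,ℝ). (This is the Lie-algebra form of the statement that the Lie group G(a₁,a₂,0,0) is locally isomorphic to S³ × S³.) -/
import Mathlib
set_option maxHeartbeats 1000000


open scoped Matrix

/-- The Lie bracket of the 6-dimensional Lie algebra `g(a₁,a₂,a₃,a₄)` of Puhle's paper,
written on `ℝ⁶` with the basis `X₁,…,X₆` corresponding to the 0-based coordinates `0,…,5`.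
Here `p = 2a₁+a₃`, `q = 2a₂+a₄`, `r = a₁−a₃`, `s = a₂−a₄`,
`α = −2(rp + sq)`, and the bracket is determined by `[X₆,X₁]=X₂`, `[X₆,X₂]=−X₁`,
`[X₆,X₃]=−X₄`, `[X₆,X₄]=X₃`, `[X₁,X₅]=−p·X₃−q·X₄`, `[X₂,X₅]=−q·X₃+p·X₄`,
`[X₃,X₅]=p·X₁+q·X₂`, `[X₄,X₅]=q·X₁−p·X₂`, `[X₁,X₃]=2r·X₅`, `[X₂,X₄]=−2r·X₅`,
`[X₁,X₄]=2s·X₅`, `[X₂,X₃]=2s·X₅`, `[X₁,X₂]=−α·X₆`, `[X₃,X₄]=α·X₆`,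
all other brackets of basis vectors being zero. -/
def gBracket (a₁ a₂ a₃ a₄ : ℝ) (x y : Fin 6 → ℝ) : Fin 6 → ℝ :=
  let p := 2 * a₁ + a₃
  let q := 2 * a₂ + a₄
  let r := a₁ - a₃
  let s := a₂ - a₄
  let α := -2 * (r * p + s * q)
  let w : Fin 6 → Fin 6 → ℝ := fun i j => x i * y j - x j * y i
  ![p * w 2 4 + q * w 3 4 + w 1 5,
    q * w 2 4 - p * w 3 4 - w 0 5,
    -(p * w 0 4) - q * w 1 4 - w 3 5,
    -(q * w 0 4) + p * w 1 4 + w 2 5,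
    2 * r * (w 0 2 - w 1 3) + 2 * s * (w 0 3 + w 1 2),
    -(α * w 0 1) + α * w 2 3]


def skm (f₁ f₂ f₃ : ℝ) : Matrix (Fin 3) (Fin 3) ℝ :=
  !![0, -f₃, f₂; f₃, 0, -f₁; -f₂, f₁, 0]

lemma skm_mem (f₁ f₂ f₃ : ℝ) : skm f₁ f₂ f₃ ∈ LieAlgebra.Orthogonal.so (Fin 3) ℝ := by
  rw [LieAlgebra.Orthogonal.mem_so]
  ext i j
  fin_cases i <;> fin_cases j <;> simp [skm]

lemma skm_add (a b c d e f : ℝ) : skm a b c + skm d e f = skm (a+d) (b+e) (c+f) := by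
  ext i j; fin_cases i <;> fin_cases j <;> simp [skm] <;> ring

lemma skm_smul (t a b c : ℝ) : t • skm a b c = skm (t*a) (t*b) (t*c) := by
  ext i j; fin_cases i <;> fin_cases j <;> simp [skm]

lemma skm_comm (a b c d e f : ℝ) :
    skm a b c * skm d e f - skm d e f * skm a b c
      = skm (b*f - c*e) (c*d - a*f) (a*e - b*d) := by
  ext i j
  fin_cases i <;> fin_cases j <;>
    simp [skm, Matrix.mul_apply, Fin.sum_univ_three] <;> ring

lemma vec6_0 (a b c d e f : ℝ) : ![a,b,c,d,e,f] (0 : Fin 6) = a := rfl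
lemma vec6_1 (a b c d e f : ℝ) : ![a,b,c,d,e,f] (1 : Fin 6) = b := rfl
lemma vec6_2 (a b c d e f : ℝ) : ![a,b,c,d,e,f] (2 : Fin 6) = c := rfl
lemma vec6_3 (a b c d e f : ℝ) : ![a,b,c,d,e,f] (3 : Fin 6) = d := rfl
lemma vec6_4 (a b c d e f : ℝ) : ![a,b,c,d,e,f] (4 : Fin 6) = e := rfl
lemma vec6_5 (a b c d e f : ℝ) : ![a,b,c,d,e,f] (5 : Fin 6) = f := rfl

lemma so3_bracket (P Q : LieAlgebra.Orthogonal.so (Fin 3) ℝ) :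
    ((⁅P, Q⁆ : LieAlgebra.Orthogonal.so (Fin 3) ℝ) : Matrix (Fin 3) (Fin 3) ℝ)
      = (P : Matrix (Fin 3) (Fin 3) ℝ) * Q - (Q : Matrix (Fin 3) (Fin 3) ℝ) * P := rfl

lemma skm_eq {a b c d e f : ℝ} (h1 : a = d) (h2 : b = e) (h3 : c = f) :
    skm a b c = skm d e f := by rw [h1, h2, h3]

def fwd (a₁ a₂ m : ℝ) (x : Fin 6 → ℝ) :
    LieAlgebra.Orthogonal.so (Fin 3) ℝ × LieAlgebra.Orthogonal.so (Fin 3) ℝ :=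
  (⟨skm (2*m*x 0 + 2*a₂*x 2 - 2*a₁*x 3) (2*m*x 1 - 2*a₁*x 2 - 2*a₂*x 3) (x 5 - 2*m*x 4),
      skm_mem _ _ _⟩,
   ⟨skm (2*m*x 0 - 2*a₂*x 2 + 2*a₁*x 3) (2*m*x 1 + 2*a₁*x 2 + 2*a₂*x 3) (x 5 + 2*m*x 4),
      skm_mem _ _ _⟩)

noncomputable def bwd (a₁ a₂ m : ℝ)
    (AB : LieAlgebra.Orthogonal.so (Fin 3) ℝ × LieAlgebra.Orthogonal.so (Fin 3) ℝ) :
    Fin 6 → ℝ :=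
  let A : Matrix (Fin 3) (Fin 3) ℝ := AB.1
  let B : Matrix (Fin 3) (Fin 3) ℝ := AB.2
  let f₁ := A 2 1; let f₂ := A 0 2; let f₃ := A 1 0
  let g₁ := B 2 1; let g₂ := B 0 2; let g₃ := B 1 0
  ![(f₁ + g₁) / (4*m), (f₂ + g₂) / (4*m),
    (a₂*(f₁ - g₁) - a₁*(f₂ - g₂)) / (4*(a₁^2 + a₂^2)),
    (-(a₁*(f₁ - g₁)) - a₂*(f₂ - g₂)) / (4*(a₁^2 + a₂^2)),
    (g₃ - f₃) / (4*m), (f₃ + g₃) / 2]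

lemma fwd_add (a₁ a₂ m : ℝ) (x y : Fin 6 → ℝ) :
    fwd a₁ a₂ m (x + y) = fwd a₁ a₂ m x + fwd a₁ a₂ m y := by
  refine Prod.ext (Subtype.ext ?_) (Subtype.ext ?_) <;>
  · show skm _ _ _ = skm _ _ _ + skm _ _ _
    rw [skm_add]
    simp only [Pi.add_apply]
    congr 1 <;> ring

lemma fwd_smul (a₁ a₂ m t : ℝ) (x : Fin 6 → ℝ) :
    fwd a₁ a₂ m (t • x) = t • fwd a₁ a₂ m x := by
  refine Prod.ext (Subtype.ext ?_) (Subtype.ext ?_) <;>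
  · show skm _ _ _ = t • skm _ _ _
    rw [skm_smul]
    simp only [Pi.smul_apply, smul_eq_mul]
    congr 1 <;> ring

lemma fwd_left_inv (a₁ a₂ m : ℝ) (h : a₁ ^ 2 + a₂ ^ 2 ≠ 0) (hm0 : m ≠ 0)
    (x : Fin 6 → ℝ) : bwd a₁ a₂ m (fwd a₁ a₂ m x) = x := by
  funext i
  fin_cases i
  · show bwd a₁ a₂ m (fwd a₁ a₂ m x) 0 = x 0
    simp [bwd, fwd, skm, vec6_0, vec6_1, vec6_2, vec6_3, vec6_4, vec6_5]
    (try field_simp)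
    (try ring)
  · show bwd a₁ a₂ m (fwd a₁ a₂ m x) 1 = x 1
    simp [bwd, fwd, skm, vec6_0, vec6_1, vec6_2, vec6_3, vec6_4, vec6_5]
    (try field_simp)
    (try ring)
  · show bwd a₁ a₂ m (fwd a₁ a₂ m x) 2 = x 2
    simp [bwd, fwd, skm, vec6_0, vec6_1, vec6_2, vec6_3, vec6_4, vec6_5]
    (try field_simp)
    (try ring)
  · show bwd a₁ a₂ m (fwd a₁ a₂ m x) 3 = x 3
    simp [bwd, fwd, skm, vec6_0, vec6_1, vec6_2, vec6_3, vec6_4, vec6_5]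
    (try field_simp)
    (try ring)
  · show bwd a₁ a₂ m (fwd a₁ a₂ m x) 4 = x 4
    simp [bwd, fwd, skm, vec6_0, vec6_1, vec6_2, vec6_3, vec6_4, vec6_5]
    (try field_simp)
    (try ring)
  · show bwd a₁ a₂ m (fwd a₁ a₂ m x) 5 = x 5
    simp [bwd, fwd, skm, vec6_0, vec6_1, vec6_2, vec6_3, vec6_4, vec6_5]
    (try field_simp)
    (try ring)

lemma fwd_right_inv (a₁ a₂ m : ℝ) (h : a₁ ^ 2 + a₂ ^ 2 ≠ 0) (hm0 : m ≠ 0)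
    (AB : LieAlgebra.Orthogonal.so (Fin 3) ℝ × LieAlgebra.Orthogonal.so (Fin 3) ℝ) :
    fwd a₁ a₂ m (bwd a₁ a₂ m AB) = AB := by
  obtain ⟨⟨A, hA⟩, ⟨B, hB⟩⟩ := AB
  rw [LieAlgebra.Orthogonal.mem_so] at hA hB
  have eA : ∀ i j : Fin 3, A j i = -(A i j) := fun i j => by
    have := congr_fun (congr_fun hA i) j
    simpa [Matrix.transpose_apply] using this
  have eB : ∀ i j : Fin 3, B j i = -(B i j) := fun i j => by
    have := congr_fun (congr_fun hB i) j
    simpa [Matrix.transpose_apply] using this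
  have hA00 : A 0 0 = 0 := by linarith [eA 0 0]
  have hA11 : A 1 1 = 0 := by linarith [eA 1 1]
  have hA22 : A 2 2 = 0 := by linarith [eA 2 2]
  have hB00 : B 0 0 = 0 := by linarith [eB 0 0]
  have hB11 : B 1 1 = 0 := by linarith [eB 1 1]
  have hB22 : B 2 2 = 0 := by linarith [eB 2 2]
  refine Prod.ext (Subtype.ext ?_) (Subtype.ext ?_) <;>
  · show skm _ _ _ = _
    ext i j
    fin_cases i <;> fin_cases j <;>
      simp [bwd, fwd, skm, hA00, hA11, hA22, hB00, hB11, hB22,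
        eA 1 0, eA 0 2, eA 2 1, eB 1 0, eB 0 2, eB 2 1,
        vec6_0, vec6_1, vec6_2, vec6_3, vec6_4, vec6_5] <;>
      (try field_simp) <;> (try ring)

lemma fwd_bracket1 (a₁ a₂ m : ℝ) (hm : m ^ 2 = a₁ ^ 2 + a₂ ^ 2) (x y : Fin 6 → ℝ) :
    (fwd a₁ a₂ m (gBracket a₁ a₂ 0 0 x y)).1
      = ⁅(fwd a₁ a₂ m x).1, (fwd a₁ a₂ m y).1⁆ := by
  apply Subtype.ext
  rw [so3_bracket]
  show skm _ _ _ = skm _ _ _ * skm _ _ _ - skm _ _ _ * skm _ _ _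
  rw [skm_comm]
  refine skm_eq ?_ ?_ ?_
  · simp [gBracket, vec6_0, vec6_1, vec6_2, vec6_3, vec6_4, vec6_5]
    linear_combination (-4 * x 4 * y 1 + 4 * x 1 * y 4) * hm
  · simp [gBracket, vec6_0, vec6_1, vec6_2, vec6_3, vec6_4, vec6_5]
    linear_combination (4 * x 4 * y 0 - 4 * x 0 * y 4) * hm
  · simp [gBracket, vec6_0, vec6_1, vec6_2, vec6_3, vec6_4, vec6_5]
    linear_combination (4 * x 1 * y 0 - 4 * x 0 * y 1) * hm

lemma fwd_bracket2 (a₁ a₂ m : ℝ) (hm : m ^ 2 = a₁ ^ 2 + a₂ ^ 2) (x y : Fin 6 → ℝ) :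
    (fwd a₁ a₂ m (gBracket a₁ a₂ 0 0 x y)).2
      = ⁅(fwd a₁ a₂ m x).2, (fwd a₁ a₂ m y).2⁆ := by
  apply Subtype.ext
  rw [so3_bracket]
  show skm _ _ _ = skm _ _ _ * skm _ _ _ - skm _ _ _ * skm _ _ _
  rw [skm_comm]
  refine skm_eq ?_ ?_ ?_
  · simp [gBracket, vec6_0, vec6_1, vec6_2, vec6_3, vec6_4, vec6_5]
    linear_combination (4 * x 4 * y 1 - 4 * x 1 * y 4) * hm
  · simp [gBracket, vec6_0, vec6_1, vec6_2, vec6_3, vec6_4, vec6_5]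
    linear_combination (-4 * x 4 * y 0 + 4 * x 0 * y 4) * hm
  · simp [gBracket, vec6_0, vec6_1, vec6_2, vec6_3, vec6_4, vec6_5]
    linear_combination (4 * x 1 * y 0 - 4 * x 0 * y 1) * hm

/-- If `a₃ = a₄ = 0` and `a₁² + a₂² ≠ 0`, the Lie algebra `g(a₁,a₂,0,0)` is isomorphic, as a
real Lie algebra, to `so(3,ℝ) × so(3,ℝ)`: there is an `ℝ`-linear equivalence onto the product
of two copies of the skew-symmetric real `3×3` matrices intertwining the brackets
componentwise. -/
theorem g_iso_so3_prod_so3 (a₁ a₂ : ℝ) (h : a₁ ^ 2 + a₂ ^ 2 ≠ 0) :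
    ∃ e : (Fin 6 → ℝ) ≃ₗ[ℝ]
        (LieAlgebra.Orthogonal.so (Fin 3) ℝ × LieAlgebra.Orthogonal.so (Fin 3) ℝ),
      ∀ x y : Fin 6 → ℝ,
        (e (gBracket a₁ a₂ 0 0 x y)).1 = ⁅(e x).1, (e y).1⁆
          ∧ (e (gBracket a₁ a₂ 0 0 x y)).2 = ⁅(e x).2, (e y).2⁆ := by
  set m := Real.sqrt (a₁ ^ 2 + a₂ ^ 2) with hmdef
  have hm : m ^ 2 = a₁ ^ 2 + a₂ ^ 2 := Real.sq_sqrt (by positivity)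
  have hm0 : m ≠ 0 := by
    intro h0
    exact h (by rw [← hm, h0]; ring)
  refine ⟨{ toFun := fwd a₁ a₂ m
            invFun := bwd a₁ a₂ m
            map_add' := fwd_add a₁ a₂ m
            map_smul' := fwd_smul a₁ a₂ m
            left_inv := fwd_left_inv a₁ a₂ m h hm0
            right_inv := fwd_right_inv a₁ a₂ m h hm0 }, ?_⟩
  intro x y
  exact ⟨fwd_bracket1 a₁ a₂ m hm x y, fwd_bracket2 a₁ a₂ m hm x y⟩
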